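/- arXiv:2405.07910 — 4 statements merged into one kernel-verified Lean document; each statement's English description precedes it below -/
import Mathlib

section
/- Under the linear error model X^ep = γ₀ + γ₁X + U with γ₁ ≠ 0, E[U|z] = 0, and quadratic outcome model E[Y] = β₀ + β₁X + β₂X² + β_z z, the contrast E[Y(X_ind = (e+δ−γ₀−u)/γ₁)|z] − E[Y(X_ref = (e−γ₀−u)/γ₁)|z] equals β₁δ/γ₁ + β₂(δ² + 2eδ − 2γ₀δ)/γ₁² when expectations over u are taken with E[u]=0. -/
open MeasureTheory

/-- Linear error `X^ep = γ₀ + γ₁ X + U` with `γ₁ ≠ 0`, `E[u|z] = 0`, and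
quadratic outcome model `E[Y|X,z] = β₀ + β₁ X + β₂ X² + β_z z`: the contrast
between true exposures `X_ind = (e + δ - γ₀ - u)/γ₁` and
`X_ref = (e - γ₀ - u)/γ₁` equals
`β₁ δ/γ₁ + β₂ (δ² + 2eδ - 2γ₀δ)/γ₁²`. -/
theorem linear_error_quadratic_contrast {Ω : Type*} [MeasurableSpace Ω]
    (μ : Measure Ω) [IsProbabilityMeasure μ]
    (u : Ω → ℝ) (β0 β1 β2 βz zc γ0 γ1 e δ : ℝ) (hγ1 : γ1 ≠ 0)
    (hintu : Integrable u μ)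
    (humean : ∫ ω, u ω ∂μ = 0) :
    ∫ ω, ((β0 + β1 * ((e + δ - γ0 - u ω) / γ1)
            + β2 * ((e + δ - γ0 - u ω) / γ1) ^ 2 + βz * zc)
          - (β0 + β1 * ((e - γ0 - u ω) / γ1)
            + β2 * ((e - γ0 - u ω) / γ1) ^ 2 + βz * zc)) ∂μ
      = β1 * δ / γ1 + β2 * (δ ^ 2 + 2 * e * δ - 2 * γ0 * δ) / γ1 ^ 2 := by
  have key : ∀ ω, ((β0 + β1 * ((e + δ - γ0 - u ω) / γ1)
            + β2 * ((e + δ - γ0 - u ω) / γ1) ^ 2 + βz * zc)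
          - (β0 + β1 * ((e - γ0 - u ω) / γ1)
            + β2 * ((e - γ0 - u ω) / γ1) ^ 2 + βz * zc))
      = (β1 * δ / γ1 + β2 * (δ ^ 2 + 2 * e * δ - 2 * γ0 * δ) / γ1 ^ 2)
        + (-(2 * β2 * δ / γ1 ^ 2)) * u ω := by
    intro ω
    field_simp
    ring
  simp_rw [key]
  rw [integral_add (integrable_const _) (hintu.const_mul _),
    integral_const, integral_const_mul, humean]
  simp
end

section
/- Under well-specified regression calibration (Condition 1) and a linear outcome model E[Y | X, C, z⁻ᶜ] = β₀ + β₁X + β_C C + β_z z⁻ᶜ, regressing Y on the calibrated variables X_RC and C_RC and z⁻ᶜ recovers the true coefficient: E[Y | X_RC, C_RC, z⁻ᶜ] = β₀ + β₁X_RC + β_C C_RC + β_z z⁻ᶜ, hence AEE(X_RC) = AEE(X) = β₁δ. -/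
open MeasureTheory ProbabilityTheory

/-!
Write `G = (X_RC, C_RC, z)`. Substituting the calibration model into the outcome model gives
`Y = φ(G) + H` with `φ` the linear predictor and `H = β₁ U* + β_C U^{C*} + ε`, a function of the
noise vector and hence independent of `G`. Conditioning on `G` keeps `φ(G)` and replaces `H` by
its mean, which is `0`.
-/

section

variable {Ω β : Type*} {m0 : MeasurableSpace Ω} [MeasurableSpace β] {μ : Measure Ω}
  [IsFiniteMeasure μ] {g : Ω → β}

theorem condExp_comap_ae_eq_integral_of_indepFun {h : Ω → ℝ} (hg : Measurable g)
    (hh : AEStronglyMeasurable h μ) (hind : IndepFun g h μ) :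
    μ[h | MeasurableSpace.comap g inferInstance] =ᵐ[μ] fun _ => μ[h] := by
  have hmk : h =ᵐ[μ] hh.mk h := hh.ae_eq_mk
  have hind_mk : IndepFun g (hh.mk h) μ := hind.congr Filter.EventuallyEq.rfl hmk
  calc μ[h | MeasurableSpace.comap g inferInstance]
      =ᵐ[μ] μ[hh.mk h | MeasurableSpace.comap g inferInstance] := condExp_congr_ae hmk
    _ =ᵐ[μ] fun _ => μ[hh.mk h] :=
        condExp_indep_eq hh.stronglyMeasurable_mk.measurable.comap_le hg.comap_le
          (comap_measurable (hh.mk h)).stronglyMeasurable hind_mk.symm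
    _ = fun _ => μ[h] := by rw [integral_congr_ae hmk]

theorem condExp_comp_add_of_indepFun {φ : β → ℝ} {h : Ω → ℝ} (hg : Measurable g)
    (hφ : Measurable φ) (hφg : Integrable (φ ∘ g) μ) (hh : Integrable h μ)
    (hind : IndepFun g h μ) :
    μ[φ ∘ g + h | MeasurableSpace.comap g inferInstance] =ᵐ[μ] φ ∘ g + fun _ => μ[h] := by
  have hφg_meas : StronglyMeasurable[MeasurableSpace.comap g inferInstance] (φ ∘ g) :=
    (hφ.comp (comap_measurable g)).stronglyMeasurable
  calc μ[φ ∘ g + h | MeasurableSpace.comap g inferInstance]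
      =ᵐ[μ] μ[φ ∘ g | MeasurableSpace.comap g inferInstance]
        + μ[h | MeasurableSpace.comap g inferInstance] := condExp_add hφg hh _
    _ =ᵐ[μ] φ ∘ g + fun _ => μ[h] := by
        rw [condExp_of_stronglyMeasurable hg.comap_le hφg_meas hφg]
        exact Filter.EventuallyEq.rfl.add
          (condExp_comap_ae_eq_integral_of_indepFun hg hh.1 hind)

end

theorem calibration_recovers_coefficients_general {Ω : Type*} [m0 : MeasurableSpace Ω]
    (μ : Measure Ω) [IsProbabilityMeasure μ]
    (Y X C XRC CRC zv Ust UC epsY : Ω → ℝ) (β0 β1 βC βz : ℝ)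
    (hY : ∀ ω, Y ω = β0 + β1 * X ω + βC * C ω + βz * zv ω + epsY ω)
    (hX : ∀ ω, X ω = XRC ω + Ust ω)
    (hC : ∀ ω, C ω = CRC ω + UC ω)
    (hmXRC : Measurable XRC) (hmCRC : Measurable CRC) (hmz : Measurable zv)
    (hInd : IndepFun (fun ω => (XRC ω, CRC ω, zv ω))
      (fun ω => (Ust ω, UC ω, epsY ω)) μ)
    (hUst : ∫ ω, Ust ω ∂μ = 0) (hUC : ∫ ω, UC ω ∂μ = 0)
    (hepsY : ∫ ω, epsY ω ∂μ = 0)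
    (hintY : Integrable Y μ) (hintU : Integrable Ust μ)
    (hintUC : Integrable UC μ) (hinteps : Integrable epsY μ) :
    (μ[Y | MeasurableSpace.comap (fun ω => (XRC ω, CRC ω, zv ω)) inferInstance]
      =ᵐ[μ] fun ω => β0 + β1 * XRC ω + βC * CRC ω + βz * zv ω)
    ∧ ∀ e δ c1 c2 : ℝ,
        (β0 + β1 * (e + δ) + βC * c1 + βz * c2)
          - (β0 + β1 * e + βC * c1 + βz * c2) = β1 * δ := by
  refine ⟨?_, fun e δ c1 c2 => by ring⟩
  set g : Ω → ℝ × ℝ × ℝ := fun ω => (XRC ω, CRC ω, zv ω)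
  let φ : ℝ × ℝ × ℝ → ℝ := fun p => β0 + β1 * p.1 + βC * p.2.1 + βz * p.2.2
  let H : Ω → ℝ := fun ω => β1 * Ust ω + βC * UC ω + epsY ω
  have hY_split : Y = φ ∘ g + H := by
    funext ω
    simp only [Pi.add_apply, Function.comp_apply, φ, g, H, hY ω, hX ω, hC ω]
    ring
  have hU := hintU.const_mul β1
  have hUC' := hintUC.const_mul βC
  have hU_UC : Integrable (fun ω => β1 * Ust ω + βC * UC ω) μ := hU.add hUC'
  have hH : Integrable H μ := hU_UC.add hinteps
  have hH_mean : μ[H] = 0 := by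
    rw [integral_add hU_UC hinteps, integral_add hU hUC', integral_const_mul,
      integral_const_mul, hUst, hUC, hepsY]
    ring
  have hφg : Integrable (φ ∘ g) μ := by
    rw [show φ ∘ g = Y - H by rw [hY_split]; abel]
    exact hintY.sub hH
  have hIndH : IndepFun g H μ := hInd.comp measurable_id
    (by fun_prop : Measurable fun p : ℝ × ℝ × ℝ => β1 * p.1 + βC * p.2.1 + p.2.2)
  rw [hY_split]
  refine (condExp_comp_add_of_indepFun (hmXRC.prodMk (hmCRC.prodMk hmz)) (by fun_prop) hφg hH
    hIndH).trans ?_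
  rw [hH_mean]
  exact Filter.Eventually.of_forall fun ω => add_zero _

/-- Under well-specified regression calibration (`X = X_RC + U*`,
`C = C_RC + U^{C*}` with mean-zero residuals independent of the calibrated
variables and covariates) and linear outcome model
`Y = β₀ + β₁ X + β_C C + β_z z + ε`, regressing `Y` on the calibrated
variables recovers the true coefficients:
`E[Y | X_RC, C_RC, z] = β₀ + β₁ X_RC + β_C C_RC + β_z z`,
hence `AEE(X_RC) = AEE(X) = β₁ δ`. -/
theorem calibration_recovers_coefficients {Ω : Type*} [m0 : MeasurableSpace Ω]
    (μ : Measure Ω) [IsProbabilityMeasure μ]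
    (Y X C XRC CRC zv Ust UC epsY : Ω → ℝ) (β0 β1 βC βz : ℝ)
    (hY : ∀ ω, Y ω = β0 + β1 * X ω + βC * C ω + βz * zv ω + epsY ω)
    (hX : ∀ ω, X ω = XRC ω + Ust ω)
    (hC : ∀ ω, C ω = CRC ω + UC ω)
    (hmXRC : Measurable XRC) (hmCRC : Measurable CRC) (hmz : Measurable zv)
    (hInd : IndepFun (fun ω => (XRC ω, CRC ω, zv ω))
      (fun ω => (Ust ω, UC ω, epsY ω)) μ)
    (hUst : ∫ ω, Ust ω ∂μ = 0) (hUC : ∫ ω, UC ω ∂μ = 0)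
    (hepsY : ∫ ω, epsY ω ∂μ = 0)
    (hintY : Integrable Y μ) (hintU : Integrable Ust μ)
    (hintUC : Integrable UC μ) (hinteps : Integrable epsY μ)
    (hintXRC : Integrable XRC μ) (hintCRC : Integrable CRC μ)
    (hintz : Integrable zv μ) :
    (μ[Y | MeasurableSpace.comap (fun ω => (XRC ω, CRC ω, zv ω)) inferInstance]
      =ᵐ[μ] fun ω => β0 + β1 * XRC ω + βC * CRC ω + βz * zv ω)
    ∧ ∀ e δ c1 c2 : ℝ,
        (β0 + β1 * (e + δ) + βC * c1 + βz * c2)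
          - (β0 + β1 * e + βC * c1 + βz * c2) = β1 * δ :=
  calibration_recovers_coefficients_general (m0 := m0) μ Y X C XRC CRC zv Ust UC epsY β0 β1 βC βz hY
    hX hC hmXRC hmCRC hmz hInd hUst hUC hepsY hintY hintU hintUC hinteps
end

section
/- Bias decomposition with emergent pseudo confounding: if X = γ₀* + γ₁*X^ep + γ₂*Q^ep + γ_z* z' + U* (calibration model) and E[Y|X,z'] = β₀ + β₁X + β_z z' (correct model), then the coefficient of X^ep in the linear projection of Y onto (X^ep, z') equals β₁(γ₁* + γ₂*ρ_{X^ep,Q^ep|z'} + ρ_{X^ep,U*|z'}), where ρ_{A,B|z'} denotes the partial regression coefficient of B on A given z'. -/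
open MeasureTheory ProbabilityTheory

noncomputable def expec {Ω : Type*} [MeasurableSpace Ω] (μ : Measure Ω) (f : Ω → ℝ) : ℝ :=
  ∫ ω, f ω ∂μ

noncomputable def varm {Ω : Type*} [MeasurableSpace Ω] (μ : Measure Ω) (f : Ω → ℝ) : ℝ :=
  expec μ (fun ω => (f ω - expec μ f) ^ 2)

noncomputable def covm {Ω : Type*} [MeasurableSpace Ω] (μ : Measure Ω) (f g : Ω → ℝ) : ℝ :=
  expec μ (fun ω => (f ω - expec μ f) * (g ω - expec μ g))

/-! Substituting the calibration model into the outcome model makes `Y` an affine function of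
`Xep`, `Qep`, `Ust` and `epsY`; the covariance with `Xep` is linear in its second argument and
`Cov(Xep, Xep) = Var(Xep)`, so dividing by `Var(Xep)` gives the decomposition. -/

section Moments

variable {Ω : Type*} [MeasurableSpace Ω] {μ : Measure Ω}

theorem covm_eq_covariance (f g : Ω → ℝ) : covm μ f g = cov[f, g; μ] := rfl

theorem varm_eq_covariance_self (f : Ω → ℝ) : varm μ f = cov[f, f; μ] := by
  simp only [varm, ← covm_eq_covariance, covm, sq]

theorem ProbabilityTheory.covariance_const_mul_add_right [IsFiniteMeasure μ] {X Y Z : Ω → ℝ}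
    (hX : MemLp X 2 μ) (hY : MemLp Y 2 μ) (hZ : MemLp Z 2 μ) (c : ℝ) :
    cov[X, fun ω => c * Y ω + Z ω; μ] = c * cov[X, Y; μ] + cov[X, Z; μ] := by
  rw [show (fun ω => c * Y ω + Z ω) = (fun ω => c * Y ω) + Z from rfl,
    covariance_add_right hX (hY.const_mul c) hZ, covariance_const_mul_right]

end Moments

/-- Bias decomposition with emergent pseudo confounding: if
`X = γ₀* + γ₁* X^ep + γ₂* Q^ep + γ_z* z' + U*` (calibration model, `z'` fixed
by conditioning) and `E[Y|X,z'] = β₀ + β₁ X + β_z z'`, then the coefficient of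
`X^ep` in the linear projection of `Y` onto `X^ep` (given `z'`) equals
`β₁ (γ₁* + γ₂* ρ_{X^ep,Q^ep|z'} + ρ_{X^ep,U*|z'})`, where `ρ_{A,B|z'}` is the
partial regression coefficient `Cov(A,B|z')/Var(A|z')`. -/
theorem epc_bias_decomposition {Ω : Type*} [MeasurableSpace Ω]
    (μ : Measure Ω) [IsProbabilityMeasure μ]
    (Xep Qep Ust epsY X Y : Ω → ℝ) (γ0s γ1s γ2s γzs β0 β1 βz zc : ℝ)
    (hX : ∀ ω, X ω = γ0s + γ1s * Xep ω + γ2s * Qep ω + γzs * zc + Ust ω)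
    (hY : ∀ ω, Y ω = β0 + β1 * X ω + βz * zc + epsY ω)
    (hXep2 : MemLp Xep 2 μ) (hQep2 : MemLp Qep 2 μ)
    (hU2 : MemLp Ust 2 μ) (heps2 : MemLp epsY 2 μ)
    (hVar : 0 < varm μ Xep)
    (hcovEps : covm μ Xep epsY = 0) :
    covm μ Xep Y / varm μ Xep
      = β1 * (γ1s + γ2s * (covm μ Xep Qep / varm μ Xep)
          + covm μ Xep Ust / varm μ Xep) := by
  simp only [covm_eq_covariance, varm_eq_covariance_self] at hVar hcovEps ⊢
  have hX' : X = fun ω => (γ0s + γzs * zc) + (γ1s * Xep ω + (γ2s * Qep ω + Ust ω)) := by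
    funext ω; rw [hX]; ring
  have hY' : Y = fun ω => (β0 + βz * zc) + (β1 * X ω + epsY ω) := by
    funext ω; rw [hY]; ring
  have hQU2 : MemLp (fun ω => γ2s * Qep ω + Ust ω) 2 μ := (hQep2.const_mul γ2s).add hU2
  have hXQU2 : MemLp (fun ω => γ1s * Xep ω + (γ2s * Qep ω + Ust ω)) 2 μ :=
    (hXep2.const_mul γ1s).add hQU2
  have hX2 : MemLp X 2 μ := by
    rw [hX']; exact (memLp_const (γ0s + γzs * zc)).add hXQU2
  have hcovX : cov[Xep, X; μ]
      = γ1s * cov[Xep, Xep; μ] + (γ2s * cov[Xep, Qep; μ] + cov[Xep, Ust; μ]) := by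
    rw [hX', covariance_const_add_right (hXQU2.integrable one_le_two),
      covariance_const_mul_add_right hXep2 hXep2 hQU2,
      covariance_const_mul_add_right hXep2 hQep2 hU2]
  have hcovY : cov[Xep, Y; μ] = β1 * cov[Xep, X; μ] := by
    have hXeps2 : MemLp (fun ω => β1 * X ω + epsY ω) 2 μ := (hX2.const_mul β1).add heps2
    rw [hY', covariance_const_add_right (hXeps2.integrable one_le_two),
      covariance_const_mul_add_right hXep2 hX2 heps2, hcovEps, add_zero]
  rw [hcovY, hcovX]
  field_simp
  ring
end

section
/- If X^ep has a one-to-one correspondence with X given z (error-free up to an invertible transformation, e.g., X^ep = γ₀ + γ₁X + v with γ₁ ≠ 0 and v constant given z), then the exchangeability probabilities satisfy P(Y(X^ep = γ₀+γ₁x+v) = Y(X = x') = y | z) = 0 for all x' ≠ x, so probabilistic exchangeability Y(X^ep) ⫫ X^ep | z is equivalent to standard exchangeability Y(x) ⫫ X | z. -/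
open MeasureTheory ProbabilityTheory

/-- One-to-one correspondence between `X^ep` and `X` (here
`X^ep = γ₀ + γ₁ X + v` with `γ₁ ≠ 0` and `v` constant given `z`): the
conditional law of `X` given `X^ep` is the point mass at the unique preimage,
so the exchangeability probability with `Y(x')` for `x' ≠ x` is zero, and
probabilistic exchangeability `Y(X^ep) ⫫ X^ep` is equivalent to standard
exchangeability `Y(x) ⫫ X`. -/
theorem bijective_error_PE_equiv_exchangeability {Ω : Type*} [MeasurableSpace Ω]
    (μ : Measure Ω) [IsProbabilityMeasure μ]
    (X Xep : Ω → ℝ) (Ypo : ℝ → Ω → ℝ) (γ0 γ1 v : ℝ) (hγ1 : γ1 ≠ 0)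
    (hXep : ∀ ω, Xep ω = γ0 + γ1 * X ω + v)
    (hmX : Measurable X) (hmY : ∀ x : ℝ, Measurable (Ypo x))
    (condLaw : ℝ → Measure ℝ)
    (hcond : ∀ e : ℝ, condLaw e = Measure.dirac ((e - γ0 - v) / γ1)) :
    (∀ x x' : ℝ, x' ≠ x → condLaw (γ0 + γ1 * x + v) {x'} = 0)
    ∧ ((∀ e : ℝ, IndepFun (Ypo ((e - γ0 - v) / γ1)) Xep μ)
        ↔ (∀ x : ℝ, IndepFun (Ypo x) X μ)) := by
  have hinv : ∀ x : ℝ, (γ0 + γ1 * x + v - γ0 - v) / γ1 = x := by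
    intro x; field_simp; ring
  constructor
  · intro x x' hne
    rw [hcond, hinv, Measure.dirac_apply' _ (measurableSet_singleton x')]
    simp [Set.indicator_of_notMem, hne.symm]
  · constructor
    · intro h x
      have h1 := h (γ0 + γ1 * x + v)
      rw [hinv] at h1
      have hX : X = (fun t : ℝ => (t - γ0 - v) / γ1) ∘ Xep := by
        funext ω; simp [hXep ω, hinv]
      rw [hX]
      exact h1.comp measurable_id (((measurable_id.sub_const γ0).sub_const v).div_const γ1)
    · intro h e
      have hXe : Xep = (fun t : ℝ => γ0 + γ1 * t + v) ∘ X := by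
        funext ω; simp [hXep ω]
      rw [hXe]
      exact (h _).comp measurable_id ((measurable_const.add (measurable_id.const_mul γ1)).add_const v)
end
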